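/- With the setup of the weakly self-avoiding walk kernel, for fixed g > 0 the map ν ↦ ‖Q(g,ν)‖ on ℝ is convex. -/

import Mathlib

open MeasureTheory
open scoped Nat RealInnerProductSpace

noncomputable def besselI0 (z : ℝ) : ℝ :=
  ∑' m : ℕ, (z / 2) ^ (2 * m) / (m ! * m !)

/-- The kernel k₀(t,s; g, ν) of the weakly self-avoiding walk transfer operator. -/
noncomputable def kernelK0 (phi : ℝ → ℝ) (g nu t s : ℝ) : ℝ :=
  Real.exp (-(g * phi t + nu * t) / 2) * Real.exp (-(g * phi s + nu * s) / 2) *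
    Real.exp (-t) * Real.exp (-s) * besselI0 (2 * Real.sqrt (s * t))

/-!
For a nonnegative kernel, `|⟪Q f, f⟫| ≤ ⟪Q |f|, |f|⟫`; since `Q` is self-adjoint, its norm is
controlled by its quadratic form (Rayleigh quotient), so `‖Q ν‖` is the supremum of
`⟪Q ν |f|, |f|⟫` over unit vectors `f`. Each of these is the integral of
`|f t| |f s| k₀(t,s;g,ν)`, and `k₀` depends on `ν` only through the factor
`exp (-ν (t + s) / 2)`, which is convex in `ν`. The integrals are finite because
`I₀(2√(st)) ≤ eˢ eᵗ` and the superlinear growth of `φ` dominate `k₀` by `w(t) w(s)` with `w ∈ L²`.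
-/

open Set Filter Real

section QuadraticForm

variable {E : Type*} [NormedAddCommGroup E] [InnerProductSpace ℝ E]

lemma ContinuousLinearMap.opNorm_le_of_abs_inner_self_le {T : E →L[ℝ] E}
    (hT : (T : E →ₗ[ℝ] E).IsSymmetric) {C : ℝ} (hC : 0 ≤ C)
    (h : ∀ x, |⟪T x, x⟫| ≤ C * ‖x‖ ^ 2) : ‖T‖ ≤ C := by
  rw [T.norm_eq_iSup_rayleighQuotient hT]
  refine ciSup_le fun x => ?_
  rcases eq_or_ne x 0 with rfl | hx
  · simpa using hC
  rw [ContinuousLinearMap.rayleighQuotient, ContinuousLinearMap.reApplyInnerSelf_apply, abs_div,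
    abs_sq, div_le_iff₀ (by positivity)]
  exact h x

lemma ContinuousLinearMap.inner_map_self_le_opNorm_mul_sq (T : E →L[ℝ] E) (x : E) :
    ⟪T x, x⟫ ≤ ‖T‖ * ‖x‖ ^ 2 :=
  calc ⟪T x, x⟫ ≤ ‖T x‖ * ‖x‖ := real_inner_le_norm _ _
    _ ≤ ‖T‖ * ‖x‖ * ‖x‖ := by gcongr; exact T.le_opNorm x
    _ = ‖T‖ * ‖x‖ ^ 2 := by ring

end QuadraticForm

lemma convexOn_integral {E α : Type*} [AddCommGroup E] [Module ℝ E] [MeasurableSpace α]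
    {μ : Measure α} {s : Set E} {F : E → α → ℝ} (hs : Convex ℝ s)
    (hF : ∀ ν ∈ s, Integrable (F ν) μ) (hconv : ∀ x, ConvexOn ℝ s (F · x)) :
    ConvexOn ℝ s (fun ν => ∫ x, F ν x ∂μ) := by
  refine ⟨hs, fun ν₁ h₁ ν₂ h₂ a b ha hb hab => ?_⟩
  have h₁' : Integrable (fun x => a • F ν₁ x) μ := (hF _ h₁).smul a
  have h₂' : Integrable (fun x => b • F ν₂ x) μ := (hF _ h₂).smul b
  calc ∫ x, F (a • ν₁ + b • ν₂) x ∂μ ≤ ∫ x, (a • F ν₁ x + b • F ν₂ x) ∂μ :=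
        integral_mono (hF _ (hs h₁ h₂ ha hb hab)) (h₁'.add h₂')
          fun x => (hconv x).2 h₁ h₂ ha hb hab
    _ = a • ∫ x, F ν₁ x ∂μ + b • ∫ x, F ν₂ x ∂μ := by
        rw [integral_add h₁' h₂', integral_smul, integral_smul]

section KernelOperator

variable {α : Type*} [MeasurableSpace α] {μ : Measure α}

lemma integrable_mul_mul_of_abs_le_mul {k : α → α → ℝ} {w : α → ℝ} (hw : MemLp w 2 μ)
    (hk : AEStronglyMeasurable (fun p : α × α => k p.1 p.2) (μ.prod μ))
    (hkw : ∀ᵐ p ∂μ.prod μ, |k p.1 p.2| ≤ w p.1 * w p.2) (f : Lp ℝ 2 μ) :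
    Integrable (fun p : α × α => f p.1 * f p.2 * k p.1 p.2) (μ.prod μ) := by
  have hfw : Integrable (fun t => |f t * w t|) μ := ((Lp.memLp f).integrable_mul hw).abs
  have hf₁ : AEStronglyMeasurable (fun p : α × α => f p.1) (μ.prod μ) :=
    (Lp.aestronglyMeasurable f).comp_quasiMeasurePreserving
      Measure.quasiMeasurePreserving_fst
  have hf₂ : AEStronglyMeasurable (fun p : α × α => f p.2) (μ.prod μ) :=
    (Lp.aestronglyMeasurable f).comp_quasiMeasurePreserving
      Measure.quasiMeasurePreserving_snd
  refine (hfw.mul_prod hfw).mono ((hf₁.mul hf₂).mul hk) ?_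
  filter_upwards [hkw] with p hp
  simp only [norm_mul, Real.norm_eq_abs, abs_abs]
  calc |f p.1| * |f p.2| * |k p.1 p.2|
      ≤ |f p.1| * |f p.2| * (|w p.1| * |w p.2|) := by
        gcongr
        exact hp.trans ((le_abs_self _).trans (abs_mul _ _).le)
    _ = |f p.1 * w p.1| * |f p.2 * w p.2| := by rw [abs_mul, abs_mul]; ring

theorem convexOn_opNorm_of_nonneg_kernel {Q : ℝ → (Lp ℝ 2 μ →L[ℝ] Lp ℝ 2 μ)}
    {K : ℝ → α → α → ℝ} (hQ : ∀ ν, IsSelfAdjoint (Q ν)) (hK_nonneg : ∀ ν t s, 0 ≤ K ν t s)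
    (hK_convex : ∀ t s, ConvexOn ℝ univ (K · t s))
    (hint : ∀ ν (f : Lp ℝ 2 μ),
      Integrable (fun p : α × α => f p.1 * f p.2 * K ν p.1 p.2) (μ.prod μ))
    (hinner : ∀ ν (f : Lp ℝ 2 μ), ⟪Q ν f, f⟫ = ∫ p, f p.1 * f p.2 * K ν p.1 p.2 ∂μ.prod μ) :
    ConvexOn ℝ univ (fun ν => ‖Q ν‖) := by
  refine ⟨convex_univ, fun ν₁ _ ν₂ _ a b ha hb hab => ?_⟩
  refine (Q _).opNorm_le_of_abs_inner_self_le (hQ _).isSymmetric (by positivity) fun f => ?_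
  have habs : ∀ ν, ⟪Q ν |f|, |f|⟫ = ∫ p, |f p.1| * |f p.2| * K ν p.1 p.2 ∂μ.prod μ := by
    intro ν
    rw [hinner]
    refine integral_congr_ae ?_
    filter_upwards [Measure.quasiMeasurePreserving_fst.ae_eq (Lp.coeFn_abs f),
      Measure.quasiMeasurePreserving_snd.ae_eq (Lp.coeFn_abs f)] with p h₁ h₂
    simp only [Function.comp_apply] at h₁ h₂
    rw [h₁, h₂]
  have hconv : ConvexOn ℝ univ (fun ν => ⟪Q ν |f|, |f|⟫) := by
    simp_rw [habs]
    refine convexOn_integral convex_univ (fun ν _ => ?_)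
      fun p => (hK_convex p.1 p.2).smul (by positivity)
    simpa only [abs_mul, abs_of_nonneg (hK_nonneg _ _ _)] using (hint ν f).abs
  calc |⟪Q (a • ν₁ + b • ν₂) f, f⟫|
      ≤ ∫ p, |f p.1 * f p.2 * K (a • ν₁ + b • ν₂) p.1 p.2| ∂μ.prod μ := by
        rw [hinner]; exact abs_integral_le_integral_abs
    _ = ⟪Q (a • ν₁ + b • ν₂) |f|, |f|⟫ := by
        simp only [habs, abs_mul, abs_of_nonneg (hK_nonneg _ _ _)]
    _ ≤ a • ⟪Q ν₁ |f|, |f|⟫ + b • ⟪Q ν₂ |f|, |f|⟫ := hconv.2 trivial trivial ha hb hab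
    _ ≤ a • (‖Q ν₁‖ * ‖f‖ ^ 2) + b • (‖Q ν₂‖ * ‖f‖ ^ 2) := by
        simp only [smul_eq_mul, ← norm_abs_eq_norm f]
        gcongr <;> exact (Q _).inner_map_self_le_opNorm_mul_sq _
    _ = (a • ‖Q ν₁‖ + b • ‖Q ν₂‖) * ‖f‖ ^ 2 := by simp only [smul_eq_mul]; ring

end KernelOperator

lemma summable_besselI0 (z : ℝ) :
    Summable (fun m : ℕ => (z / 2) ^ (2 * m) / (m ! * m ! : ℝ)) := by
  refine (Real.summable_pow_div_factorial (z ^ 2 / 4)).of_nonneg_of_le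
    (fun m => by rw [pow_mul]; positivity) fun m => ?_
  have hterm : (z / 2) ^ (2 * m) / (m ! * m ! : ℝ) = (z ^ 2 / 4) ^ m / m ! / m ! := by
    rw [pow_mul, div_pow, div_div]
    norm_num
  rw [hterm]
  exact div_le_self (by positivity) (by exact_mod_cast m.factorial_pos)

lemma besselI0_nonneg (z : ℝ) : 0 ≤ besselI0 z :=
  tsum_nonneg fun m => by rw [pow_mul]; positivity

lemma measurable_besselI0 : Measurable besselI0 :=
  measurable_of_tendsto_metrizable
    (fun _ => Finset.measurable_sum _ fun _ _ =>
      ((measurable_id.div_const 2).pow_const _).div_const _)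
    (tendsto_pi_nhds.2 fun z => (summable_besselI0 z).hasSum.tendsto_sum_nat)

lemma besselI0_two_mul_sqrt_mul_le {s t : ℝ} (hs : 0 ≤ s) (ht : 0 ≤ t) :
    besselI0 (2 * √(s * t)) ≤ exp s * exp t := by
  have hterm (m : ℕ) :
      (2 * √(s * t) / 2) ^ (2 * m) / (m ! * m ! : ℝ) = s ^ m / m ! * (t ^ m / m !) := by
    rw [mul_div_cancel_left₀ _ two_ne_zero, pow_mul, sq_sqrt (mul_nonneg hs ht), mul_pow,
      div_mul_div_comm]
  have hexp : exp s = ∑' m : ℕ, s ^ m / m ! := by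
    rw [exp_eq_exp_ℝ, NormedSpace.exp_eq_tsum_div]
  have hle (m : ℕ) : s ^ m / m ! * (t ^ m / m !) ≤ s ^ m / m ! * exp t := by
    gcongr; exact pow_div_factorial_le_exp t ht m
  have hsum := (Real.summable_pow_div_factorial s).mul_right (exp t)
  unfold besselI0
  simp_rw [hterm]
  rw [hexp, ← tsum_mul_right]
  exact (hsum.of_nonneg_of_le (fun m => by positivity) hle).tsum_le_tsum hle hsum

section Kernel

variable (phi : ℝ → ℝ) (g : ℝ)

lemma kernelK0_nonneg (nu t s : ℝ) : 0 ≤ kernelK0 phi g nu t s :=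
  mul_nonneg (by positivity) (besselI0_nonneg _)

lemma kernelK0_eq_mul_exp (nu t s : ℝ) :
    kernelK0 phi g nu t s = kernelK0 phi g 0 t s * exp (-(t + s) / 2 * nu) := by
  simp only [kernelK0, zero_mul, add_zero]
  rw [show -(g * phi t + nu * t) / 2 = -(g * phi t) / 2 + -(nu * t) / 2 by ring,
    show -(g * phi s + nu * s) / 2 = -(g * phi s) / 2 + -(nu * s) / 2 by ring,
    show -(t + s) / 2 * nu = -(nu * t) / 2 + -(nu * s) / 2 by ring]
  simp only [exp_add]
  ring

lemma convexOn_kernelK0 (t s : ℝ) : ConvexOn ℝ univ (fun nu => kernelK0 phi g nu t s) := by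
  have hexp : ConvexOn ℝ univ (fun nu => exp (-(t + s) / 2 * nu)) :=
    convexOn_exp.comp_linearMap (LinearMap.lsmul ℝ ℝ (-(t + s) / 2))
  exact (hexp.smul (kernelK0_nonneg phi g 0 t s)).congr fun nu _ =>
    (kernelK0_eq_mul_exp phi g nu t s).symm

lemma kernelK0_le {t s : ℝ} (ht : 0 ≤ t) (hs : 0 ≤ s) (nu : ℝ) :
    kernelK0 phi g nu t s ≤
      exp (-(g * phi t + nu * t) / 2) * exp (-(g * phi s + nu * s) / 2) := by
  calc kernelK0 phi g nu t s
      ≤ exp (-(g * phi t + nu * t) / 2) * exp (-(g * phi s + nu * s) / 2) *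
          exp (-t) * exp (-s) * (exp s * exp t) := by
        unfold kernelK0; gcongr; exact besselI0_two_mul_sqrt_mul_le hs ht
    _ = exp (-(g * phi t + nu * t) / 2) * exp (-(g * phi s + nu * s) / 2) := by
        have hcancel : exp (-t) * exp (-s) * (exp s * exp t) = 1 := by
          rw [← exp_add, ← exp_add, ← exp_add, ← exp_zero]; ring_nf
        linear_combination
          exp (-(g * phi t + nu * t) / 2) * exp (-(g * phi s + nu * s) / 2) * hcancel

lemma aestronglyMeasurable_kernelK0 {μ : Measure ℝ} (hphi : AEMeasurable phi μ) (nu : ℝ) :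
    AEStronglyMeasurable (fun p : ℝ × ℝ => kernelK0 phi g nu p.1 p.2) (μ.prod μ) := by
  have h₁ : AEMeasurable (fun p : ℝ × ℝ => phi p.1) (μ.prod μ) :=
    hphi.comp_quasiMeasurePreserving Measure.quasiMeasurePreserving_fst
  have h₂ : AEMeasurable (fun p : ℝ × ℝ => phi p.2) (μ.prod μ) :=
    hphi.comp_quasiMeasurePreserving Measure.quasiMeasurePreserving_snd
  have h₃ : Measurable (fun p : ℝ × ℝ => besselI0 (2 * √(p.2 * p.1))) :=
    measurable_besselI0.comp (by fun_prop)
  have hw₁ : AEMeasurable (fun p : ℝ × ℝ => exp (-(g * phi p.1 + nu * p.1) / 2)) (μ.prod μ) := by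
    fun_prop
  have hw₂ : AEMeasurable (fun p : ℝ × ℝ => exp (-(g * phi p.2 + nu * p.2) / 2)) (μ.prod μ) := by
    fun_prop
  exact ((((hw₁.mul hw₂).mul (by fun_prop)).mul (by fun_prop)).mul
    h₃.aemeasurable).aestronglyMeasurable

end Kernel

section Weight

variable {phi : ℝ → ℝ}

lemma aemeasurable_restrict_Ici_of_monotoneOn_div
    (hphi_mono : MonotoneOn (fun t => phi t / t) (Ioi 0)) :
    AEMeasurable phi (volume.restrict (Ici 0)) := by
  rw [← Measure.restrict_congr_set Ioi_ae_eq_Ici]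
  have hdiv : AEMeasurable (fun t => phi t / t) (volume.restrict (Ioi 0)) :=
    aemeasurable_restrict_of_monotoneOn measurableSet_Ioi hphi_mono
  refine (aemeasurable_id.mul hdiv).congr ?_
  filter_upwards [ae_restrict_mem measurableSet_Ioi] with t (ht : 0 < t)
  simp only [Pi.mul_apply, id_eq, mul_div_cancel₀ _ ht.ne']

lemma exists_sub_le_mul_add_mul (hphi_nonneg : ∀ t, 0 ≤ t → 0 ≤ phi t)
    (hphi_super : Tendsto (fun t => phi t / t) atTop atTop) {g : ℝ} (hg : 0 < g) (nu : ℝ) :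
    ∃ C, ∀ t, 0 ≤ t → t - C ≤ g * phi t + nu * t := by
  obtain ⟨T, hT⟩ := eventually_atTop.1 (hphi_super.eventually_ge_atTop ((1 + |nu|) / g))
  refine ⟨(1 + |nu|) * max T 1, fun t ht => ?_⟩
  have hnu : -|nu| * t ≤ nu * t := mul_le_mul_of_nonneg_right (neg_abs_le nu) ht
  rcases le_or_gt (max T 1) t with hTt | htT
  · have htpos : 0 < t := one_pos.trans_le ((le_max_right _ _).trans hTt)
    have hgrowth : (1 + |nu|) * t ≤ g * phi t := by
      have := hT t ((le_max_left _ _).trans hTt)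
      rw [div_le_div_iff₀ hg htpos] at this
      linarith
    nlinarith [le_max_right T 1, abs_nonneg nu]
  · have := mul_nonneg hg.le (hphi_nonneg t ht)
    nlinarith [abs_nonneg nu]

lemma memLp_two_exp_neg_half (hphi_meas : AEMeasurable phi (volume.restrict (Ici 0)))
    (hphi_nonneg : ∀ t, 0 ≤ t → 0 ≤ phi t)
    (hphi_super : Tendsto (fun t => phi t / t) atTop atTop) {g : ℝ} (hg : 0 < g) (nu : ℝ) :
    MemLp (fun t => exp (-(g * phi t + nu * t) / 2)) 2 (volume.restrict (Ici 0)) := by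
  obtain ⟨C, hC⟩ := exists_sub_le_mul_add_mul hphi_nonneg hphi_super hg nu
  have hmeas : AEStronglyMeasurable (fun t => exp (-(g * phi t + nu * t) / 2))
      (volume.restrict (Ici 0)) := by
    fun_prop
  rw [memLp_two_iff_integrable_sq hmeas]
  have hbound : IntegrableOn (fun t => exp C * exp (-t)) (Ici 0) :=
    ((integrableOn_Ici_iff_integrableOn_Ioi (by finiteness)).2
      (integrableOn_exp_neg_Ioi 0)).const_mul _
  refine hbound.mono' (hmeas.pow 2) ?_
  filter_upwards [ae_restrict_mem measurableSet_Ici] with t (ht : 0 ≤ t)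
  rw [norm_of_nonneg (by positivity), sq, ← exp_add, ← exp_add, exp_le_exp]
  linarith [hC t ht]

end Weight

theorem opNorm_Q_convex_general
    (phi : ℝ → ℝ)
    (hphi_nonneg : ∀ t : ℝ, 0 ≤ t → 0 ≤ phi t)
    (hphi_mono : MonotoneOn (fun t => phi t / t) (Set.Ioi (0 : ℝ)))
    (hphi_super : Filter.Tendsto (fun t => phi t / t) Filter.atTop Filter.atTop)
    (g : ℝ) (hg : 0 < g)
    (Q : ℝ → (Lp ℝ 2 (volume.restrict (Set.Ici (0 : ℝ))) →L[ℝ]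
      Lp ℝ 2 (volume.restrict (Set.Ici (0 : ℝ)))))
    (hQ_selfadj : ∀ nu : ℝ, IsSelfAdjoint (Q nu))
    (hQ_inner : ∀ (nu : ℝ) (f : Lp ℝ 2 (volume.restrict (Set.Ici (0 : ℝ)))),
      ⟪Q nu f, f⟫ =
        ∫ t in Set.Ici (0 : ℝ), ∫ s in Set.Ici (0 : ℝ),
          f t * f s * kernelK0 phi g nu t s) :
    ConvexOn ℝ Set.univ (fun nu => ‖Q nu‖) := by
  have hphi := aemeasurable_restrict_Ici_of_monotoneOn_div hphi_mono
  have hbound (nu : ℝ) : ∀ᵐ p ∂(volume.restrict (Ici (0 : ℝ))).prod (volume.restrict (Ici 0)),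
      |kernelK0 phi g nu p.1 p.2| ≤
        exp (-(g * phi p.1 + nu * p.1) / 2) * exp (-(g * phi p.2 + nu * p.2) / 2) := by
    rw [Measure.prod_restrict]
    filter_upwards [ae_restrict_mem (measurableSet_Ici.prod measurableSet_Ici)] with p ⟨h₁, h₂⟩
    rw [abs_of_nonneg (kernelK0_nonneg phi g nu _ _)]
    exact kernelK0_le phi g h₁ h₂ nu
  have hint (nu : ℝ) := integrable_mul_mul_of_abs_le_mul
    (memLp_two_exp_neg_half hphi hphi_nonneg hphi_super hg nu)
    (aestronglyMeasurable_kernelK0 phi g hphi nu) (hbound nu)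
  exact convexOn_opNorm_of_nonneg_kernel hQ_selfadj (kernelK0_nonneg phi g)
    (convexOn_kernelK0 phi g) hint fun nu f => (hQ_inner nu f).trans (integral_integral (hint nu f))

/-- For fixed `g > 0`, the map `ν ↦ ‖Q(g,ν)‖` is convex on ℝ. -/
theorem opNorm_Q_convex
    (phi : ℝ → ℝ) (hphi0 : phi 0 = 0)
    (hphi_nonneg : ∀ t : ℝ, 0 ≤ t → 0 ≤ phi t)
    (hphi_mono : MonotoneOn (fun t => phi t / t) (Set.Ioi (0 : ℝ)))
    (hphi_super : Filter.Tendsto (fun t => phi t / t) Filter.atTop Filter.atTop)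
    (g : ℝ) (hg : 0 < g)
    (Q : ℝ → (Lp ℝ 2 (volume.restrict (Set.Ici (0 : ℝ))) →L[ℝ]
      Lp ℝ 2 (volume.restrict (Set.Ici (0 : ℝ)))))
    (hQ_selfadj : ∀ nu : ℝ, IsSelfAdjoint (Q nu))
    (hQ_inner : ∀ (nu : ℝ) (f : Lp ℝ 2 (volume.restrict (Set.Ici (0 : ℝ)))),
      ⟪Q nu f, f⟫ =
        ∫ t in Set.Ici (0 : ℝ), ∫ s in Set.Ici (0 : ℝ),
          f t * f s * kernelK0 phi g nu t s) :
    ConvexOn ℝ Set.univ (fun nu => ‖Q nu‖) :=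
  opNorm_Q_convex_general phi hphi_nonneg hphi_mono hphi_super g hg Q hQ_selfadj hQ_inner
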